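/- arXiv:1812.06651 — 3 statements merged into one kernel-verified Lean document; each statement's English description precedes it below -/
import Mathlib

section
/- Suppose d(x,y) = log sup_{α ∈ S} (i(y,α)/i(x,α)) for a family of positive functions i(x,·) : S → ℝ_{>0} indexed by x ∈ X, and suppose ψ_ξ(x) = log( sup_{α} i(ξ,α)/i(x,α) ) - log( sup_{α} i(ξ,α)/i(b,α) ) for some function i(ξ,·) : S → ℝ_{≥0}. If a sequence (x_n) in X admits for each n an element α_n ∈ S with d(x_n, b) ≤ log(i(b,α_n)/i(x_n,α_n)) + ε and i(ξ,α_n)/i(b,α_n) ≥ C' > 0 for all n, then there is a constant C > 0 independent of n such that d(x_n, b) ≥ ψ_ξ(x_n) ≥ d(x_n, b) - C for all n. -/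
/-!
Writing `iξ β / i x β = (iξ β / i b β) * (i b β / i x β)` and taking suprema gives the
multiplicative triangle inequality `sup iξ/i x ≤ (sup iξ/i b) (sup i b/i x)`, i.e. `ψ ≤ d(·, b)`.
Evaluating the same factorisation at `α n` instead bounds `sup iξ/i x n` below by
`C' · i b (α n)/i (x n) (α n)`, whose logarithm is at least `log C' + d(x n, b) - ε`; so
`C = ε + log (sup iξ/i b) - log C'` works.
-/

open Real Set

section RatioSup

variable {S : Type*} {u v w : S → ℝ}

theorem iSup_div_le_iSup_div_mul_iSup_div (hu : ∀ β, 0 < u β) (hv : ∀ β, 0 < v β)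
    (hwu : BddAbove (range fun β => w β / u β)) (huv : BddAbove (range fun β => u β / v β))
    (hwu_nonneg : 0 ≤ ⨆ β, w β / u β) :
    ⨆ β, w β / v β ≤ (⨆ β, w β / u β) * ⨆ β, u β / v β := by
  have huv_nonneg : ∀ β, 0 ≤ u β / v β := fun β => (div_pos (hu β) (hv β)).le
  refine Real.iSup_le (fun β => ?_) (mul_nonneg hwu_nonneg (Real.iSup_nonneg huv_nonneg))
  rw [← div_mul_div_cancel₀ (hu β).ne']
  exact mul_le_mul (le_ciSup hwu β) (le_ciSup huv β) (huv_nonneg β) hwu_nonneg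

theorem exists_pos_of_iSup_pos {f : S → ℝ} (h : 0 < ⨆ β, f β) : ∃ β, 0 < f β := by
  by_contra! hf
  exact h.not_ge (Real.iSup_le hf le_rfl)

theorem log_iSup_div_le_add (hu : ∀ β, 0 < u β) (hv : ∀ β, 0 < v β)
    (hwu : BddAbove (range fun β => w β / u β)) (huv : BddAbove (range fun β => u β / v β))
    (hwv : BddAbove (range fun β => w β / v β)) (hwu_pos : 0 < ⨆ β, w β / u β) :
    log (⨆ β, w β / v β) ≤ log (⨆ β, w β / u β) + log (⨆ β, u β / v β) := by
  obtain ⟨β, hβ⟩ := exists_pos_of_iSup_pos hwu_pos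
  have hwβ : 0 < w β := (div_pos_iff_of_pos_right (hu β)).mp hβ
  have huv_pos : 0 < ⨆ β, u β / v β := (div_pos (hu β) (hv β)).trans_le (le_ciSup huv β)
  have hwv_pos : 0 < ⨆ β, w β / v β := (div_pos hwβ (hv β)).trans_le (le_ciSup hwv β)
  rw [← log_mul hwu_pos.ne' huv_pos.ne']
  exact log_le_log hwv_pos (iSup_div_le_iSup_div_mul_iSup_div hu hv hwu huv hwu_pos.le)

theorem log_add_log_div_le_log_iSup_div (hu : ∀ β, 0 < u β) (hv : ∀ β, 0 < v β)
    (hwv : BddAbove (range fun β => w β / v β)) {c : ℝ} (hc : 0 < c) {α : S}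
    (hcα : c ≤ w α / u α) :
    log c + log (u α / v α) ≤ log (⨆ β, w β / v β) := by
  have huvα : 0 < u α / v α := div_pos (hu α) (hv α)
  rw [← log_mul hc.ne' huvα.ne']
  refine log_le_log (mul_pos hc huvα) ((le_ciSup hwv α).trans' ?_)
  calc c * (u α / v α) ≤ w α / u α * (u α / v α) := mul_le_mul_of_nonneg_right hcα huvα.le
    _ = w α / v α := div_mul_div_cancel₀ (hu α).ne'

end RatioSup

theorem horofunction_compare_dist_general {X S : Type*}
    (d : X → X → ℝ) (i : X → S → ℝ) (iξ : S → ℝ) (b : X) (ψ : X → ℝ)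
    (hpos : ∀ (x : X) (α : S), 0 < i x α)
    (hbdd : ∀ x y : X, BddAbove (Set.range fun α : S => i y α / i x α))
    (hbddξ : ∀ x : X, BddAbove (Set.range fun α : S => iξ α / i x α))
    (hdist : ∀ x y : X, d x y = Real.log (⨆ α : S, i y α / i x α))
    (hhoro : ∀ x : X, ψ x =
      Real.log (⨆ α : S, iξ α / i x α) - Real.log (⨆ α : S, iξ α / i b α))
    (x : ℕ → X) (α : ℕ → S) (ε C' : ℝ) (hε : 0 < ε) (hC' : 0 < C')
    (hα : ∀ n, d (x n) b ≤ Real.log (i b (α n) / i (x n) (α n)) + ε)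
    (hlow : ∀ n, C' ≤ iξ (α n) / i b (α n)) :
    ∃ C > 0, ∀ n, ψ (x n) ≤ d (x n) b ∧ d (x n) b - C ≤ ψ (x n) := by
  have hC'_le : C' ≤ ⨆ β, iξ β / i b β := (hlow 0).trans (le_ciSup (hbddξ b) (α 0))
  have hlog_le : log C' ≤ log (⨆ β, iξ β / i b β) := log_le_log hC' hC'_le
  refine ⟨ε + (log (⨆ β, iξ β / i b β) - log C'), by linarith, fun n => ⟨?_, ?_⟩⟩
  · have := log_iSup_div_le_add (hpos b) (hpos (x n)) (hbddξ b) (hbdd (x n) b) (hbddξ (x n))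
      (hC'.trans_le hC'_le)
    rw [hhoro, hdist]
    linarith
  · have := log_add_log_div_le_log_iSup_div (hpos b) (hpos (x n)) (hbddξ (x n)) hC' (hlow n)
    rw [hhoro]
    linarith [hα n]

/-- Comparison of the distance and a horofunction when both are given by ratios.
`d x y = log sup_α i(y,α)/i(x,α)` and
`ψ x = log(sup_α iξ(α)/i(x,α)) - log(sup_α iξ(α)/i(b,α))`.
If along a sequence `x n` there are `α n` almost realizing the distance to the base
point while `iξ (α n) / i b (α n) ≥ C' > 0`, then `d (x n) b ≥ ψ (x n) ≥ d (x n) b - C`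
for a constant `C > 0` independent of `n`. -/
theorem horofunction_compare_dist {X S : Type*} [Nonempty S]
    (d : X → X → ℝ) (i : X → S → ℝ) (iξ : S → ℝ) (b : X) (ψ : X → ℝ)
    (hpos : ∀ (x : X) (α : S), 0 < i x α)
    (hinf : ∀ x : X, ∃ c > 0, ∀ α : S, c ≤ i x α)
    (hiξ : ∀ α : S, 0 ≤ iξ α)
    (hbdd : ∀ x y : X, BddAbove (Set.range fun α : S => i y α / i x α))
    (hbddξ : ∀ x : X, BddAbove (Set.range fun α : S => iξ α / i x α))
    (hdist : ∀ x y : X, d x y = Real.log (⨆ α : S, i y α / i x α))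
    (hhoro : ∀ x : X, ψ x =
      Real.log (⨆ α : S, iξ α / i x α) - Real.log (⨆ α : S, iξ α / i b α))
    (x : ℕ → X) (α : ℕ → S) (ε C' : ℝ) (hε : 0 < ε) (hC' : 0 < C')
    (hα : ∀ n, d (x n) b ≤ Real.log (i b (α n) / i (x n) (α n)) + ε)
    (hlow : ∀ n, C' ≤ iξ (α n) / i b (α n)) :
    ∃ C > 0, ∀ n, ψ (x n) ≤ d (x n) b ∧ d (x n) b - C ≤ ψ (x n) :=
  horofunction_compare_dist_general d i iξ b ψ hpos hbdd hbddξ hdist hhoro x α ε C' hε hC' hα hlow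
end

section
/- Let g be a homeomorphism of a compact metrizable space ∂X with north-south dynamics with fixed points γ₊, γ₋, and let h be a homeomorphism such that {hγ₊, hγ₋} ∩ {γ₊, γ₋} = ∅. Let μ_i (i ∈ ℕ) be the probability measure on the group generated by g,h with μ_i(g) = 1 − 1/i and μ_i(h) = 1/i, and let ν_i be a μ_i-stationary Borel probability measure on ∂X. Then any weak-* limit of the sequence (ν_i) is the Dirac measure δ_{γ₊}. -/
open MeasureTheory

/-- North-south dynamics for a homeomorphism `g` with fixed points `γp ≠ γm`. -/
def NorthSouth {Y : Type*} [TopologicalSpace Y] (g : Y ≃ₜ Y) (γp γm : Y) : Prop :=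
  γp ≠ γm ∧ g γp = γp ∧ g γm = γm ∧
  (∀ U : Set Y, IsOpen U → γp ∈ U → ∀ K : Set Y, IsCompact K → γm ∉ K →
    ∃ N : ℕ, ∀ n ≥ N, (⇑g)^[n] '' K ⊆ U) ∧
  (∀ U : Set Y, IsOpen U → γm ∈ U → ∀ K : Set Y, IsCompact K → γp ∉ K →
    ∃ N : ℕ, ∀ n ≥ N, (⇑g.symm)^[n] '' K ⊆ U)

/-!
Weak limits of the `ν i` are `g`-invariant, because the weight of `h` tends to zero. A
`g`-invariant measure gives no mass to a closed set avoiding `γp` and `γm`, since some `g⁻ⁿ`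
squeezes it, together with a closed neighbourhood `T` of `γm`, into `T`; so it lives on
`{γp, γm}`. To remove the atom at `γm`, take an open `V ∋ γm` with `g⁻¹ V ⊆ V` whose closure
misses `h γp` and `h γm`. Stationarity gives `ν i V ≤ ν i (h⁻¹ V)`, and in the limit
`νinf V ≤ νinf (h⁻¹ (closure V)) = 0`.
-/

open Filter Set Topology
open scoped ENNReal NNReal

section Stationary

variable {Ω : Type*} [MeasurableSpace Ω]

/-- Stationarity for the measure giving mass `1 - t` to `f` and mass `t` to `g`. -/
def IsStationaryMixture (f g : Ω → Ω) (t : ℝ≥0) (μ : Measure Ω) : Prop :=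
  μ = (1 - t) • μ.map f + t • μ.map g

variable {f g : Ω → Ω} {t : ℝ≥0} {μ : Measure Ω}

lemma isStationaryMixture_iff (hf : Measurable f) (hg : Measurable g) :
    IsStationaryMixture f g t μ ↔ ∀ A, MeasurableSet A →
      μ A = ((1 - t : ℝ≥0) : ℝ≥0∞) * μ (f ⁻¹' A) + t * μ (g ⁻¹' A) := by
  simp only [IsStationaryMixture, Measure.ext_iff, Measure.add_apply, Measure.smul_apply,
    ENNReal.smul_def, smul_eq_mul]
  refine forall₂_congr fun A hA => ?_
  rw [Measure.map_apply hf hA, Measure.map_apply hg hA]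

lemma IsStationaryMixture.measure_le_measure_preimage [IsFiniteMeasure μ]
    (hμ : IsStationaryMixture f g t μ) (hf : Measurable f) (hg : Measurable g) (ht₀ : t ≠ 0)
    (ht₁ : t ≤ 1) {V : Set Ω} (hV : MeasurableSet V) (hfV : f ⁻¹' V ⊆ V) : μ V ≤ μ (g ⁻¹' V) := by
  have hle : ((1 - t : ℝ≥0) : ℝ≥0∞) * μ V + t * μ V
      ≤ ((1 - t : ℝ≥0) : ℝ≥0∞) * μ V + t * μ (g ⁻¹' V) :=
    calc _ = μ V := by
          rw [← add_mul, ← ENNReal.coe_add, tsub_add_cancel_of_le ht₁, ENNReal.coe_one, one_mul]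
      _ = ((1 - t : ℝ≥0) : ℝ≥0∞) * μ (f ⁻¹' V) + t * μ (g ⁻¹' V) :=
          (isStationaryMixture_iff hf hg).1 hμ V hV
      _ ≤ _ := by gcongr
  rwa [ENNReal.add_le_add_iff_left (by finiteness),
    ENNReal.mul_le_mul_iff_right (by exact_mod_cast ht₀) ENNReal.coe_ne_top] at hle

variable [TopologicalSpace Ω] [BorelSpace Ω] [HasOuterApproxClosed Ω]

lemma map_eq_self_of_tendsto_of_isStationaryMixture {ι : Type*} {L : Filter ι} [L.NeBot]
    (hf : Continuous f) (hg : Continuous g) {ts : ι → ℝ≥0} (hts : Tendsto ts L (𝓝 0))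
    {μs : ι → FiniteMeasure Ω} {μ : FiniteMeasure Ω} (hμs : Tendsto μs L (𝓝 μ))
    (hstat : ∀ᶠ i in L, IsStationaryMixture f g (ts i) (μs i)) :
    (μ : Measure Ω).map f = μ := by
  have hlim : Tendsto (fun i => (1 - ts i) • (μs i).map f + ts i • (μs i).map g) L
      (𝓝 ((1 - 0 : ℝ≥0) • μ.map f + (0 : ℝ≥0) • μ.map g)) :=
    ((tendsto_const_nhds.sub hts).smul
      (FiniteMeasure.tendsto_map_of_tendsto_of_continuous _ _ hμs hf)).add
      (hts.smul (FiniteMeasure.tendsto_map_of_tendsto_of_continuous _ _ hμs hg))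
  have hfix : μ.map f = μ := by
    refine tendsto_nhds_unique (by simpa using hlim) (hμs.congr' ?_)
    filter_upwards [hstat] with i hi
    exact FiniteMeasure.toMeasure_injective hi
  rw [← FiniteMeasure.toMeasure_map, hfix]

end Stationary

lemma MeasureTheory.ProbabilityMeasure.measure_le_of_tendsto {Ω ι : Type*} [MeasurableSpace Ω]
    [TopologicalSpace Ω] [OpensMeasurableSpace Ω] [HasOuterApproxClosed Ω]
    {L : Filter ι} [L.NeBot] {μs : ι → ProbabilityMeasure Ω} {μ : ProbabilityMeasure Ω}
    (hμs : Tendsto μs L (𝓝 μ)) {U F : Set Ω} (hU : IsOpen U) (hF : IsClosed F)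
    (hle : ∀ᶠ i in L, (μs i : Measure Ω) U ≤ (μs i : Measure Ω) F) :
    (μ : Measure Ω) U ≤ (μ : Measure Ω) F :=
  calc (μ : Measure Ω) U ≤ L.liminf fun i => (μs i : Measure Ω) U :=
        ProbabilityMeasure.le_liminf_measure_open_of_tendsto hμs hU
    _ ≤ L.liminf fun i => (μs i : Measure Ω) F := liminf_le_liminf hle
    _ ≤ L.limsup fun i => (μs i : Measure Ω) F := liminf_le_limsup
    _ ≤ (μ : Measure Ω) F := ProbabilityMeasure.limsup_measure_closed_le_of_tendsto hμs hF

lemma MeasureTheory.Measure.eq_dirac_of_measure_compl_singleton {α : Type*} [MeasurableSpace α]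
    [MeasurableSingletonClass α] {μ : Measure α} [IsProbabilityMeasure μ] {a : α}
    (h : μ {a}ᶜ = 0) : μ = Measure.dirac a := by
  have ha : μ {a} = 1 := (prob_compl_eq_zero_iff (measurableSet_singleton a)).1 h
  have hae : ∀ᵐ x ∂μ, x ∈ ({a} : Finset α) := by
    rw [ae_iff]
    exact measure_mono_null (fun x hx => by simpa using hx) h
  simpa [ha] using Measure.ae_mem_finset_iff.1 hae

lemma Homeomorph.image_symm_iterate {Y : Type*} [TopologicalSpace Y] (e : Y ≃ₜ Y) (n : ℕ)
    (s : Set Y) : (⇑e.symm)^[n] '' s = (⇑e)^[n] ⁻¹' s :=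
  congrFun (image_eq_preimage_of_inverse (Function.LeftInverse.iterate e.apply_symm_apply n)
    (Function.RightInverse.iterate e.symm_apply_apply n)) s

namespace NorthSouth

variable {Y : Type*} [TopologicalSpace Y] [CompactSpace Y] [T2Space Y]
  {g : Y ≃ₜ Y} {γp γm : Y}

lemma notMem_closure_iUnion_image_iterate (hns : NorthSouth g γp γm) {C : Set Y}
    (hC : IsClosed C) (hmC : γm ∉ C) : γm ∉ closure (⋃ n, (⇑g)^[n] '' C) := by
  obtain ⟨hne, -, hgm, hfwd, -⟩ := hns
  obtain ⟨U, W, hU, hW, hpU, hmW, hUW⟩ := t2_separation hne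
  obtain ⟨N, hN⟩ := hfwd U hU hpU C hC.isCompact hmC
  have hsub : ⋃ n, (⇑g)^[n] '' C ⊆ Wᶜ ∪ ⋃ n ∈ Iio N, (⇑g)^[n] '' C := by
    refine iUnion_subset fun n => ?_
    rcases lt_or_ge n N with hn | hn
    · exact subset_union_of_subset_right
        (subset_biUnion_of_mem (u := fun n => (⇑g)^[n] '' C) (mem_Iio.2 hn)) _
    · exact subset_union_of_subset_left ((hN n hn).trans hUW.subset_compl_right) _
  have hclosed : IsClosed (Wᶜ ∪ ⋃ n ∈ Iio N, (⇑g)^[n] '' C) :=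
    hW.isClosed_compl.union ((finite_Iio N).isClosed_biUnion fun n _ =>
      (hC.isCompact.image (g.continuous.iterate n)).isClosed)
  intro hm
  rcases closure_minimal hsub hclosed hm with hmW' | hmC'
  · exact hmW' hmW
  · obtain ⟨n, -, hn⟩ := mem_iUnion₂.1 hmC'
    rw [← Function.iterate_fixed hgm n, (g.injective.iterate n).mem_set_image] at hn
    exact hmC hn

lemma exists_isOpen_preimage_subset (hns : NorthSouth g γp γm) {K : Set Y} (hK : IsClosed K)
    (hmK : γm ∉ K) :
    ∃ V : Set Y, IsOpen V ∧ γm ∈ V ∧ ⇑g ⁻¹' V ⊆ V ∧ Disjoint (closure V) K := by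
  obtain ⟨C, hCK, hC, hCm⟩ := exists_mem_nhdsSet_isClosed_subset
    (isOpen_compl_singleton.mem_nhdsSet.2 fun x hx (hxm : x = γm) => hmK (hxm ▸ hx)) hK
  -- `V` is the complement of the closure `S` of the forward orbit of a closed neighbourhood of `K`.
  set S := closure (⋃ n, (⇑g)^[n] '' C)
  have hmaps : MapsTo g S S := by
    refine MapsTo.closure (fun x hx => ?_) g.continuous
    obtain ⟨n, y, hy, rfl⟩ := mem_iUnion.1 hx
    exact mem_iUnion.2 ⟨n + 1, y, hy, Function.iterate_succ_apply' _ n y⟩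
  have hCS : C ⊆ S := fun x hx => subset_closure (mem_iUnion.2 ⟨0, x, hx, rfl⟩)
  refine ⟨Sᶜ, isClosed_closure.isOpen_compl,
    hns.notMem_closure_iUnion_image_iterate hC fun h => hCm h rfl,
    fun x hx hxS => hx (hmaps hxS), ?_⟩
  rw [closure_compl, disjoint_compl_left_iff_subset]
  exact (subset_interior_iff_mem_nhdsSet.2 hCK).trans (interior_mono hCS)

variable [MeasurableSpace Y] [BorelSpace Y] {μ : Measure Y} [IsFiniteMeasure μ]

lemma measure_eq_zero_of_isClosed (hns : NorthSouth g γp γm) (hμ : MeasurePreserving g μ μ)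
    {K : Set Y} (hK : IsClosed K) (hpK : γp ∉ K) (hmK : γm ∉ K) : μ K = 0 := by
  obtain ⟨hne, -, -, -, hbwd⟩ := hns
  obtain ⟨T, hT, hTc, hTK⟩ := exists_mem_nhds_isClosed_subset (x := γm)
    ((hK.union (isClosed_singleton (x := γp))).isOpen_compl.mem_nhds (by simp [hmK, hne.symm]))
  have hKT : Disjoint K T :=
    disjoint_left.2 fun x hxK hxT => hTK hxT (Or.inl hxK)
  obtain ⟨N, hN⟩ := hbwd (interior T) isOpen_interior (mem_interior_iff_mem_nhds.2 hT) (K ∪ T)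
    (hK.union hTc).isCompact fun hp => hp.elim hpK fun hpT => hTK hpT (Or.inr rfl)
  have hpre : (⇑g)^[N] ⁻¹' (K ∪ T) ⊆ T :=
    (g.image_symm_iterate N _).symm.subset.trans ((hN N le_rfl).trans interior_subset)
  have hKT' : μ K + μ T ≤ 0 + μ T :=
    calc μ K + μ T = μ (K ∪ T) := (measure_union hKT hTc.measurableSet).symm
      _ = μ ((⇑g)^[N] ⁻¹' (K ∪ T)) :=
          ((hμ.iterate N).measure_preimage (hK.union hTc).measurableSet.nullMeasurableSet).symm
      _ ≤ 0 + μ T := by rw [zero_add]; exact measure_mono hpre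
  exact nonpos_iff_eq_zero.1 ((ENNReal.add_le_add_iff_right (measure_ne_top μ T)).1 hKT')

lemma measure_compl_pair_eq_zero [TopologicalSpace.PseudoMetrizableSpace Y]
    (hns : NorthSouth g γp γm) (hμ : MeasurePreserving g μ μ) : μ {γp, γm}ᶜ = 0 := by
  rw [(toFinite {γp, γm}).isClosed.isOpen_compl.measure_eq_iSup_isClosed μ]
  simp only [ENNReal.iSup_eq_zero]
  exact fun K hK hKc => hns.measure_eq_zero_of_isClosed hμ hKc (fun h => hK h (Or.inl rfl))
    (fun h => hK h (Or.inr rfl))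

end NorthSouth

/-- Let `g` have north-south dynamics with fixed points `γ₊, γ₋` and let `h` move
`{γ₊, γ₋}` off itself. If `ν i` is a stationary measure for the measure giving mass
`1 - 1/i` to `g` and `1/i` to `h`, then any weak-* limit of `(ν i)` is `δ_{γ₊}`. -/
theorem stationary_limit_dirac {Y : Type*} [TopologicalSpace Y] [CompactSpace Y]
    [TopologicalSpace.MetrizableSpace Y] [MeasurableSpace Y] [BorelSpace Y]
    (g h : Y ≃ₜ Y) (γp γm : Y) (hns : NorthSouth g γp γm)
    (hh : ({h γp, h γm} : Set Y) ∩ {γp, γm} = ∅)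
    (ν : ℕ → ProbabilityMeasure Y)
    (hstat : ∀ i : ℕ, 1 ≤ i → ∀ A : Set Y, MeasurableSet A →
      (ν i : Measure Y) A =
        (1 - 1 / (i : ENNReal)) * (ν i : Measure Y) (⇑g ⁻¹' A) +
          (1 / (i : ENNReal)) * (ν i : Measure Y) (⇑h ⁻¹' A))
    (νinf : ProbabilityMeasure Y) (φ : ℕ → ℕ) (hφ : StrictMono φ)
    (hlim : Filter.Tendsto (fun i => ν (φ i)) Filter.atTop (nhds νinf)) :
    (νinf : Measure Y) = Measure.dirac γp := by
  have hφ₁ : ∀ᶠ i in atTop, 1 ≤ φ i := hφ.tendsto_atTop.eventually_ge_atTop 1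
  have hstat' : ∀ᶠ i in atTop, IsStationaryMixture g h (φ i : ℝ≥0)⁻¹ (ν (φ i)) := by
    filter_upwards [hφ₁] with i hi
    refine (isStationaryMixture_iff g.measurable h.measurable).2 fun A hA => ?_
    have hi₀ : (φ i : ℝ≥0) ≠ 0 := by exact_mod_cast (Nat.one_le_iff_ne_zero.1 hi)
    rw [ENNReal.coe_sub, ENNReal.coe_inv hi₀, ENNReal.coe_one, ENNReal.coe_natCast, ← one_div]
    exact hstat _ hi A hA
  have hinv : MeasurePreserving g (νinf : Measure Y) νinf :=
    ⟨g.measurable, map_eq_self_of_tendsto_of_isStationaryMixture g.continuous h.continuous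
      (tendsto_inv_atTop_zero.comp (tendsto_natCast_atTop_atTop.comp hφ.tendsto_atTop))
      ((ProbabilityMeasure.tendsto_nhds_iff_toFiniteMeasure_tendsto_nhds _).1 hlim) hstat'⟩
  have hconc := hns.measure_compl_pair_eq_zero hinv
  obtain ⟨V, hVo, hmV, hgV, hVh⟩ := hns.exists_isOpen_preimage_subset
    (toFinite {h γp, h γm}).isClosed fun hm => hh.subset ⟨hm, Or.inr rfl⟩
  have hV : (νinf : Measure Y) V = 0 := by
    have hF : h ⁻¹' closure V ⊆ {γp, γm}ᶜ := by
      rintro x hx (rfl | rfl)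
      exacts [hVh.notMem_of_mem_left hx (Or.inl rfl), hVh.notMem_of_mem_left hx (Or.inr rfl)]
    have hle : ∀ᶠ i in atTop,
        (ν (φ i) : Measure Y) V ≤ (ν (φ i) : Measure Y) (h ⁻¹' closure V) := by
      filter_upwards [hstat', hφ₁] with i hi hi₁
      refine (hi.measure_le_measure_preimage g.measurable h.measurable ?_ (Nat.cast_inv_le_one _)
        hVo.measurableSet hgV).trans (measure_mono (preimage_mono subset_closure))
      exact inv_ne_zero (by exact_mod_cast (Nat.one_le_iff_ne_zero.1 hi₁))
    exact nonpos_iff_eq_zero.1 ((ProbabilityMeasure.measure_le_of_tendsto hlim hVo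
      (isClosed_closure.preimage h.continuous) hle).trans ((measure_mono hF).trans hconc.le))
  refine Measure.eq_dirac_of_measure_compl_singleton
    (measure_mono_null (fun x hx => ?_) (measure_union_null hconc hV))
  by_cases hxm : x = γm
  · exact Or.inr (hxm ▸ hmV)
  · exact Or.inl fun hx' => hx'.elim hx hxm
end

section
/- Let g have north-south dynamics on a compact metrizable space ∂X with attracting fixed point γ₊ and repelling fixed point γ₋. For any closed neighborhood A₋ of γ₋ not containing γ₊, if A₋ is chosen sufficiently small then the set A := ∪_{n≥0} g⁻ⁿ(A₋) is closed, satisfies g⁻¹A ⊂ A, and does not contain γ₊. -/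
lemma iterate_preimage_eq_image_symm {Y : Type*} [TopologicalSpace Y] (g : Y ≃ₜ Y)
    (n : ℕ) (s : Set Y) : (⇑g)^[n] ⁻¹' s = (⇑g.symm)^[n] '' s := by
  induction n with
  | zero => simp
  | succ n ih =>
    rw [Function.iterate_succ, Set.preimage_comp, ih, Function.iterate_succ',
      Function.comp_def]
    ext x
    simp only [Set.mem_preimage, Set.mem_image]
    constructor
    · rintro ⟨y, hy, hxy⟩
      exact ⟨y, hy, by rw [hxy]; exact g.symm_apply_apply x⟩
    · rintro ⟨y, hy, hxy⟩
      exact ⟨y, hy, by rw [← hxy]; exact (g.apply_symm_apply _).symm⟩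

/-- For `g` with north-south dynamics there is a neighborhood `V` of `γ₋` such that
for every closed neighborhood `A₋ ⊆ V` of `γ₋`, the union
`A := ⋃_{n ≥ 0} g⁻ⁿ(A₋)` is closed, satisfies `g⁻¹ A ⊆ A`, and avoids `γ₊`. -/
theorem northSouth_absorbing_set {Y : Type*} [TopologicalSpace Y] [CompactSpace Y]
    [TopologicalSpace.MetrizableSpace Y]
    (g : Y ≃ₜ Y) (γp γm : Y) (hns : NorthSouth g γp γm) :
    ∃ V ∈ nhds γm, ∀ Am : Set Y, IsClosed Am → Am ∈ nhds γm → Am ⊆ V →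
      IsClosed (⋃ n : ℕ, (⇑g)^[n] ⁻¹' Am) ∧
      ⇑g ⁻¹' (⋃ n : ℕ, (⇑g)^[n] ⁻¹' Am) ⊆ (⋃ n : ℕ, (⇑g)^[n] ⁻¹' Am) ∧
      γp ∉ (⋃ n : ℕ, (⇑g)^[n] ⁻¹' Am) := by
  letI : MetricSpace Y := TopologicalSpace.metrizableSpaceMetric Y
  obtain ⟨hne, hgp, hgm, _hattr, hrep⟩ := hns
  -- fixed point of iterates
  have hfixp : ∀ n : ℕ, (⇑g)^[n] γp = γp := fun n =>
    Function.iterate_fixed hgp n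
  refine ⟨{γp}ᶜ, ?_, ?_⟩
  · exact IsOpen.mem_nhds (isOpen_compl_singleton) (by simpa using hne.symm)
  intro Am hAmclosed hAmnhds hAmsub
  have hγpAm : γp ∉ Am := fun h => hAmsub h rfl
  have hγpA : γp ∉ ⋃ n : ℕ, (⇑g)^[n] ⁻¹' Am := by
    simp only [Set.mem_iUnion, Set.mem_preimage, not_exists]
    intro n
    rw [hfixp n]; exact hγpAm
  refine ⟨?_, ?_, hγpA⟩
  · -- closedness
    rw [← isOpen_compl_iff, isOpen_iff_forall_mem_open]
    intro x hx
    have hxA : x ∉ ⋃ n : ℕ, (⇑g)^[n] ⁻¹' Am := hx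
    have hxm : x ≠ γm := by
      rintro rfl
      exact hxA (Set.mem_iUnion.2 ⟨0, by simpa using mem_of_mem_nhds hAmnhds⟩)
    -- closed nbhd W of γm avoiding x
    obtain ⟨W, hWnhds, hWclosed, hWsub⟩ :=
      exists_mem_nhds_isClosed_subset (IsOpen.mem_nhds isOpen_compl_singleton (by simpa using (Ne.symm hxm)))
    obtain ⟨Wo, hWo_sub, hWo_open, hWo_mem⟩ := mem_nhds_iff.1 hWnhds
    have hAmcompact : IsCompact Am := hAmclosed.isCompact
    obtain ⟨N, hN⟩ := hrep Wo hWo_open hWo_mem Am hAmcompact hγpAm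
    -- A ⊆ F := finite union ∪ W
    set F : Set Y := (⋃ n ∈ Finset.range N, (⇑g)^[n] ⁻¹' Am) ∪ W with hF
    have hFclosed : IsClosed F := by
      apply IsClosed.union _ hWclosed
      apply Set.Finite.isClosed_biUnion (Finset.range N).finite_toSet
      intro n _
      exact hAmclosed.preimage (g.continuous.iterate n)
    have hAF : (⋃ n : ℕ, (⇑g)^[n] ⁻¹' Am) ⊆ F := by
      intro y hy
      obtain ⟨n, hn⟩ := Set.mem_iUnion.1 hy
      by_cases hnN : n < N
      · exact Or.inl (Set.mem_biUnion (Finset.mem_range.2 hnN) hn)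
      · right
        apply hWo_sub
        have := hN n (le_of_not_gt hnN)
        rw [iterate_preimage_eq_image_symm] at hn
        exact this hn
    have hxF : x ∉ F := by
      rintro (h | h)
      · obtain ⟨n, _, hn⟩ := Set.mem_iUnion₂.1 h
        exact hxA (Set.mem_iUnion.2 ⟨n, hn⟩)
      · exact hWsub h rfl
    exact ⟨Fᶜ, fun y hy hAy => hy (hAF hAy), hFclosed.isOpen_compl, hxF⟩
  · -- g⁻¹ A ⊆ A
    intro x hx
    obtain ⟨n, hn⟩ := Set.mem_iUnion.1 hx
    refine Set.mem_iUnion.2 ⟨n + 1, ?_⟩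
    simpa [Function.iterate_succ_apply] using hn
end
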